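/- In the setting of the quadtree mixture algorithm, for every t ≥ 0 and every block s of the complete quadtree of depth d_max, the marginal posterior probability that s is a leaf of the true model satisfies ∑_{m ∈ M : s ∈ L^m} p(m | v^t) = (1 − g_{s|t}) · ∏_{s' ∈ A_s} g_{s'|t}, where A_s is the set of proper ancestor blocks of s and g_{s|t} are the sequentially updated hyperparameters of the algorithm. -/

import Mathlib

/-!
The prior weight of a quadtree factorizes over its nodes, `weight G u (node c) = G u * ∏ weight`
of the children, so sums over trees factorize: the total weight is `1` once `G` vanishes on
singleton blocks, and the trees having `s` as a leaf carry weight `(1 - G s) ∏_{A_s} G`.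
Observing pixel `t` multiplies the weight of `m` by `q̃` at the leaf of `m` containing `t`; since
along the path `S_t` the update satisfies `(1 - g') q = (1 - g) q̃` and `g' q = g q(child)`, and
`g' = g` off the path, this equals `q(v_t | root)` times the weight of `m` under the updated `g'`.
Hence `p(m) p(v^t | m)` is a constant times the weight of `m` under `g_{·|t}`, so the posterior is
again a tree prior and the marginal formula holds with the updated weights.
-/

inductive FullTree (k : ℕ) : ℕ → Type where
  | leaf {D : ℕ} : FullTree k D
  | node {D : ℕ} (c : Fin k → FullTree k D) : FullTree k (D + 1)

namespace FullTree

def equivZero (k : ℕ) : FullTree k 0 ≃ Unit where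
  toFun _ := ()
  invFun _ := .leaf
  left_inv t := by cases t; rfl
  right_inv _ := rfl

def equivSucc (k D : ℕ) : FullTree k (D + 1) ≃ Option (Fin k → FullTree k D) where
  toFun t := match t with
    | .leaf => none
    | .node c => some c
  invFun o := match o with
    | none => .leaf
    | some c => .node c
  left_inv t := by cases t <;> rfl
  right_inv o := by cases o <;> rfl

instance instFintype (k : ℕ) : (D : ℕ) → Fintype (FullTree k D)
  | 0 => Fintype.ofEquiv Unit (equivZero k).symm
  | (D + 1) => letI := instFintype k D; Fintype.ofEquiv _ (equivSucc k D).symm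

noncomputable instance (k D : ℕ) : DecidableEq (FullTree k D) := Classical.decEq _

/-- The set of (paths to) leaf nodes of a full subtree whose root has path `u`. -/
def leaves {k : ℕ} : {D : ℕ} → List (Fin k) → FullTree k D → Finset (List (Fin k))
  | _, u, .leaf => {u}
  | _, u, .node c => Finset.univ.biUnion fun i => leaves (u ++ [i]) (c i)

/-- The set of (paths to) inner nodes of a full subtree whose root has path `u`. -/
def inners {k : ℕ} : {D : ℕ} → List (Fin k) → FullTree k D → Finset (List (Fin k))
  | _, _, .leaf => ∅
  | _, u, .node c => insert u (Finset.univ.biUnion fun i => inners (u ++ [i]) (c i))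

/-- The weight ∏_{u ∈ L^T} (1 - g u) * ∏_{u ∈ I^T} g u of a full subtree rooted at path `u`. -/
noncomputable def weight {k D : ℕ} (g : List (Fin k) → ℝ) (u : List (Fin k))
    (T : FullTree k D) : ℝ :=
  (∏ s ∈ leaves u T, (1 - g s)) * ∏ s ∈ inners u T, g s

end FullTree

namespace FullTree

/-- Follow the path `p` down the full subtree `T` (whose root has path `u`) until a leaf of
`T` is reached; returns the path of that leaf.  For a pixel `p` (a path of full length
`dmax`), `leafOf [] m p` is the unique leaf block `s_m` of `m` containing the pixel `p`. -/
def leafOf {k : ℕ} : {D : ℕ} → List (Fin k) → FullTree k D → List (Fin k) → List (Fin k)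
  | _, u, .leaf, _ => u
  | _, u, .node _, [] => u
  | _, u, .node c, i :: p => leafOf (u ++ [i]) (c i) p

end FullTree

/-- The likelihood `p(v^{t-1} | m) = ∏_{i < t} q̃(v_i | v^{i-1}, s_m(i))` of the first `t`
pixel values under model `m`, where `qt i s x = q̃(x | v^{i-1}, s)` is the per-block
predictive pmf and `s_m(i)` the unique leaf of `m` containing pixel `i`. -/
noncomputable def like (dmax : ℕ) {V : Type} (qt : ℕ → List (Fin 4) → V → ℝ)
    (v : ℕ → V) (pix : ℕ → List (Fin 4)) (m : FullTree 4 dmax) (t : ℕ) : ℝ :=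
  ∏ i ∈ Finset.range t, qt i (FullTree.leafOf [] m (pix i)) (v i)

/-- `Qd dmax qt v pix G t j` is the recursively mixed coding probability
`q(v_t | v^{t-1}, s)` at the block `s = (pix t).take (dmax - j)` on the path `S_t` of blocks
containing pixel `t` (`j` is the distance from `s` down to the singleton block of `S_t`),
computed with the current weights `G = g_{·|t-1}`:
`q = q̃` at singleton blocks and `q = (1 - g_{s|t-1}) q̃ + g_{s|t-1} q(child)` otherwise. -/
noncomputable def Qd (dmax : ℕ) {V : Type} (qt : ℕ → List (Fin 4) → V → ℝ)
    (v : ℕ → V) (pix : ℕ → List (Fin 4)) (G : List (Fin 4) → ℝ) (t : ℕ) : ℕ → ℝ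
  | 0 => qt t ((pix t).take dmax) (v t)
  | j + 1 =>
    (1 - G ((pix t).take (dmax - (j + 1)))) * qt t ((pix t).take (dmax - (j + 1))) (v t)
      + G ((pix t).take (dmax - (j + 1))) * Qd dmax qt v pix G t j

/-- One step of the weight update: `g_{s|t} = g_{s|t-1}` if `s ∉ S_t` or `|s| = 1`
(`s ∈ S_t` iff `s` is a prefix of the pixel path `pix t`; `|s| = 1` iff `s.length = dmax`),
and `g_{s|t} = g_{s|t-1} · q(v_t | v^{t-1}, s_child) / q(v_t | v^{t-1}, s)` otherwise. -/
noncomputable def Gnext (dmax : ℕ) {V : Type} (qt : ℕ → List (Fin 4) → V → ℝ)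
    (v : ℕ → V) (pix : ℕ → List (Fin 4)) (G : List (Fin 4) → ℝ) (t : ℕ)
    (s : List (Fin 4)) : ℝ :=
  if s <+: pix t ∧ s.length < dmax then
    G s * Qd dmax qt v pix G t (dmax - s.length - 1) / Qd dmax qt v pix G t (dmax - s.length)
  else G s

/-- `GT dmax qt v pix g t s = g_{s|t-1}`: the sequentially updated weights, with
`GT ... 0 s = g_{s|-1} = g s`. -/
noncomputable def GT (dmax : ℕ) {V : Type} (qt : ℕ → List (Fin 4) → V → ℝ)
    (v : ℕ → V) (pix : ℕ → List (Fin 4)) (g : List (Fin 4) → ℝ) : ℕ → List (Fin 4) → ℝ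
  | 0 => g
  | t + 1 => Gnext dmax qt v pix (GT dmax qt v pix g t) t

theorem List.eq_of_append_singleton_prefix {α : Type*} {u x : List α} {i j : α}
    (hi : u ++ [i] <+: x) (hj : u ++ [j] <+: x) : i = j := by
  obtain ⟨r, rfl⟩ := hi
  obtain ⟨r', hr'⟩ := hj
  simp only [List.append_assoc, List.singleton_append, List.append_cancel_left_eq,
    List.cons.injEq] at hr'
  exact hr'.1.symm

theorem List.prod_map_dropLast_inits_cons {α M : Type*} [Monoid M] (f : List α → M) (a : α)
    (l : List α) :
    ((a :: l).inits.dropLast.map f).prod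
      = f [] * (l.inits.dropLast.map fun y => f (a :: y)).prod := by
  rw [List.inits_cons, List.dropLast_cons_of_ne_nil (by simp [← List.length_pos_iff])]
  simp [List.map_dropLast, Function.comp_def]

namespace FullTree

variable {k : ℕ}

theorem prefix_of_mem_leaves : ∀ {D : ℕ} {u x : List (Fin k)} {T : FullTree k D},
    x ∈ leaves u T → u <+: x
  | _, _, _, .leaf, hx => by rw [leaves, Finset.mem_singleton] at hx; rw [hx]
  | _, u, _, .node c, hx => by
      simp only [leaves, Finset.mem_biUnion, Finset.mem_univ, true_and] at hx
      obtain ⟨i, hi⟩ := hx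
      exact (List.prefix_append u [i]).trans (prefix_of_mem_leaves hi)

theorem prefix_of_mem_inners : ∀ {D : ℕ} {u x : List (Fin k)} {T : FullTree k D},
    x ∈ inners u T → u <+: x
  | _, _, _, .leaf, hx => by simp [inners] at hx
  | _, u, _, .node c, hx => by
      simp only [inners, Finset.mem_insert, Finset.mem_biUnion, Finset.mem_univ,
        true_and] at hx
      rcases hx with rfl | ⟨i, hi⟩
      · exact List.prefix_rfl
      · exact (List.prefix_append u [i]).trans (prefix_of_mem_inners hi)

theorem mem_leaves_self_iff {D : ℕ} {u : List (Fin k)} {T : FullTree k D} :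
    u ∈ leaves u T ↔ T = .leaf := by
  cases T with
  | leaf => simp [leaves]
  | node c =>
    simp only [leaves, Finset.mem_biUnion, Finset.mem_univ, true_and, reduceCtorEq, iff_false,
      not_exists]
    intro i hi
    simpa using (prefix_of_mem_leaves hi).length_le

theorem mem_leaves_node_iff {D : ℕ} {u w : List (Fin k)} {i : Fin k}
    {c : Fin k → FullTree k D} :
    u ++ i :: w ∈ leaves u (.node c) ↔ u ++ i :: w ∈ leaves (u ++ [i]) (c i) := by
  simp only [leaves, Finset.mem_biUnion, Finset.mem_univ, true_and]
  refine ⟨fun ⟨j, hj⟩ => ?_, fun h => ⟨i, h⟩⟩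
  obtain rfl : j = i := List.eq_of_append_singleton_prefix (prefix_of_mem_leaves hj)
    ⟨w, by simp⟩
  exact hj

theorem weight_leaf {D : ℕ} (G : List (Fin k) → ℝ) (u : List (Fin k)) :
    weight G u (.leaf : FullTree k D) = 1 - G u := by
  simp [weight, leaves, inners]

theorem weight_node {D : ℕ} (G : List (Fin k) → ℝ) (u : List (Fin k))
    (c : Fin k → FullTree k D) :
    weight G u (.node c) = G u * ∏ i, weight G (u ++ [i]) (c i) := by
  have hdisj {f : List (Fin k) → FullTree k D → Finset (List (Fin k))}
      (hf : ∀ {v x T}, x ∈ f v T → v <+: x) :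
      (↑(Finset.univ : Finset (Fin k)) : Set (Fin k)).PairwiseDisjoint
        fun i => f (u ++ [i]) (c i) :=
    fun i _ j _ hij => Finset.disjoint_left.2 fun _ hxi hxj =>
      hij (List.eq_of_append_singleton_prefix (hf hxi) (hf hxj))
  have hu : u ∉ Finset.univ.biUnion fun i => inners (u ++ [i]) (c i) := by
    simp only [Finset.mem_biUnion, Finset.mem_univ, true_and, not_exists]
    intro i hi
    simpa using (prefix_of_mem_inners hi).length_le
  rw [weight, leaves, inners, Finset.prod_insert hu,
    Finset.prod_biUnion (hdisj (f := leaves) prefix_of_mem_leaves),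
    Finset.prod_biUnion (hdisj (f := inners) prefix_of_mem_inners)]
  simp only [weight, Finset.prod_mul_distrib]
  ring

theorem weight_congr {D : ℕ} {G G' : List (Fin k) → ℝ} {u : List (Fin k)} (T : FullTree k D)
    (h : ∀ x, u <+: x → G x = G' x) : weight G u T = weight G' u T := by
  unfold weight
  congr 1
  · exact Finset.prod_congr rfl fun x hx => by rw [h x (prefix_of_mem_leaves hx)]
  · exact Finset.prod_congr rfl fun x hx => by rw [h x (prefix_of_mem_inners hx)]

theorem sum_univ_depth_zero {M : Type*} [AddCommMonoid M] (f : FullTree k 0 → M) :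
    ∑ T, f T = f .leaf := by
  rw [← (equivZero k).symm.sum_comp f]
  simp [equivZero]

theorem sum_univ_succ {M : Type*} [AddCommMonoid M] {D : ℕ} (f : FullTree k (D + 1) → M) :
    ∑ T, f T = f .leaf + ∑ c : Fin k → FullTree k D, f (.node c) := by
  rw [← (equivSucc k D).symm.sum_comp f, Fintype.sum_option]
  rfl

theorem sum_weight_eq_one (G : List (Fin k) → ℝ) : ∀ {D : ℕ} (u : List (Fin k)),
    (∀ x, u <+: x → x.length = u.length + D → G x = 0) →
    ∑ T : FullTree k D, weight G u T = 1
  | 0, u, H => by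
      rw [sum_univ_depth_zero, weight_leaf, H u List.prefix_rfl rfl, sub_zero]
  | D + 1, u, H => by
      have hchild (i : Fin k) : ∑ T : FullTree k D, weight G (u ++ [i]) T = 1 :=
        sum_weight_eq_one G _ fun x hx hlen =>
          H x ((List.prefix_append u [i]).trans hx) (by simp [hlen]; omega)
      simp only [sum_univ_succ, weight_leaf, weight_node, ← Finset.mul_sum, ← Fintype.prod_sum,
        hchild, Finset.prod_const_one]
      ring

theorem sum_weight_filter_mem_leaves (G : List (Fin k) → ℝ) :
    ∀ {D : ℕ} (u w : List (Fin k)), w.length ≤ D →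
    (∀ x, u <+: x → x.length = u.length + D → G x = 0) →
    ∑ T ∈ Finset.univ.filter (fun T : FullTree k D => u ++ w ∈ leaves u T), weight G u T
      = (1 - G (u ++ w)) * (w.inits.dropLast.map fun y => G (u ++ y)).prod
  | _, u, [], _, _ => by
      simp [mem_leaves_self_iff, Finset.filter_eq', weight_leaf]
  | D + 1, u, i :: w, hw, H => by
      have hchild (j : Fin k) :
          ∀ x, u ++ [j] <+: x → x.length = (u ++ [j]).length + D → G x = 0 :=
        fun x hx hlen => H x ((List.prefix_append u [j]).trans hx) (by simp [hlen]; omega)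
      let F (j : Fin k) (T : FullTree k D) : ℝ :=
        if j = i then (if u ++ i :: w ∈ leaves (u ++ [j]) T then weight G (u ++ [j]) T else 0)
        else weight G (u ++ [j]) T
      have hnode (c : Fin k → FullTree k D) :
          (if u ++ i :: w ∈ leaves u (.node c) then weight G u (.node c) else 0)
            = G u * ∏ j, F j (c j) := by
        by_cases h : u ++ i :: w ∈ leaves (u ++ [i]) (c i)
        · rw [if_pos (mem_leaves_node_iff.2 h), weight_node]
          congr 1
          refine Finset.prod_congr rfl fun j _ => ?_
          by_cases hj : j = i
          · subst hj; simp [F, h]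
          · simp [F, hj]
        · rw [if_neg (mt mem_leaves_node_iff.1 h),
            Finset.prod_eq_zero (Finset.mem_univ i) (by simp [F, h]), mul_zero]
      have hF (j : Fin k) : ∑ T, F j T = if j = i
          then (1 - G (u ++ i :: w)) * (w.inits.dropLast.map fun y => G (u ++ i :: y)).prod
          else 1 := by
        by_cases hj : j = i
        · subst hj
          simpa [F, ← Finset.sum_filter] using
            sum_weight_filter_mem_leaves G (u ++ [j]) w (by simpa using hw) (hchild j)
        · simpa [F, hj] using sum_weight_eq_one G (u ++ [j]) (hchild j)
      rw [Finset.sum_filter, sum_univ_succ, Finset.sum_congr rfl fun c _ => hnode c,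
        ← Finset.mul_sum, ← Fintype.prod_sum, Finset.prod_congr rfl fun j _ => hF j,
        Finset.prod_ite_eq', List.prod_map_dropLast_inits_cons]
      simp [leaves]
      ring

/-- One Bayesian update along the path `p` of a new observation: together the hypotheses say
that `q x = (1 - G x) * a x + G x * q (child of x on p)` and that `G'` is the posterior of `G`. -/
theorem weight_mul_leafOf {G G' a q : List (Fin k) → ℝ} {p : List (Fin k)}
    (h_off : ∀ x, ¬ x <+: p → G' x = G x)
    (h_leaf : ∀ x, x <+: p → (1 - G x) * a x = q x * (1 - G' x))
    (h_node : ∀ x i, x ++ [i] <+: p → G x * q (x ++ [i]) = q x * G' x) :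
    ∀ {D : ℕ} (T : FullTree k D) (u r : List (Fin k)), u ++ r = p → D ≤ r.length →
      weight G u T * a (leafOf u T r) = q u * weight G' u T
  | _, .leaf, u, r, hp, _ => by
      rw [leafOf, weight_leaf, weight_leaf]
      exact h_leaf u ⟨r, hp⟩
  | _, .node c, u, [], _, hD => by simp at hD
  | _, .node c, u, i :: r, hp, hD => by
      have hi : u ++ [i] <+: p := ⟨r, by simpa using hp⟩
      have hchild := weight_mul_leafOf h_off h_leaf h_node (c i) (u ++ [i]) r (by simpa using hp)
        (by simpa using hD)
      have hrest : ∏ j ∈ {i}ᶜ, weight G (u ++ [j]) (c j)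
          = ∏ j ∈ {i}ᶜ, weight G' (u ++ [j]) (c j) :=
        Finset.prod_congr rfl fun j hj => weight_congr _ fun x hx => (h_off x fun hxp =>
          (Finset.mem_compl.1 hj) (Finset.mem_singleton.2
            (List.eq_of_append_singleton_prefix (hx.trans hxp) hi))).symm
      rw [leafOf, weight_node, weight_node, Fintype.prod_eq_mul_prod_compl i,
        Fintype.prod_eq_mul_prod_compl i, hrest]
      set R := ∏ j ∈ {i}ᶜ, weight G' (u ++ [j]) (c j)
      linear_combination (G u * R) * hchild + (weight G' (u ++ [i]) (c i) * R) * h_node u i hi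

end FullTree

section Algorithm

open FullTree

variable {V : Type} {dmax : ℕ} {qt : ℕ → List (Fin 4) → V → ℝ} {v : ℕ → V}
  {pix : ℕ → List (Fin 4)} {G : List (Fin 4) → ℝ} {t : ℕ}

theorem Qd_pos (hqt : ∀ s, 0 < qt t s (v t)) (hG : ∀ x, x <+: pix t → G x ∈ Set.Icc 0 1) :
    ∀ j, 0 < Qd dmax qt v pix G t j
  | 0 => hqt _
  | j + 1 => by
      rw [Qd]
      set y := (pix t).take (dmax - (j + 1))
      obtain ⟨hG0, hG1⟩ := hG y (List.take_prefix _ _)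
      rcases hG0.eq_or_lt with h | h
      · simpa [← h] using hqt y
      · exact add_pos_of_nonneg_of_pos (mul_nonneg (sub_nonneg.2 hG1) (hqt y).le)
          (mul_pos h (Qd_pos hqt hG j))

theorem Qd_of_prefix {x : List (Fin 4)} (hx : x <+: pix t) (hlt : x.length < dmax) :
    Qd dmax qt v pix G t (dmax - x.length)
      = (1 - G x) * qt t x (v t) + G x * Qd dmax qt v pix G t (dmax - x.length - 1) := by
  obtain ⟨j, hj⟩ : ∃ j, dmax - x.length = j + 1 := ⟨dmax - x.length - 1, by omega⟩
  rw [show dmax - x.length - 1 = j by omega, hj, Qd, ← hj, Nat.sub_sub_self hlt.le,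
    ← List.prefix_iff_eq_take.1 hx]

theorem Qd_of_eq_pix {x : List (Fin 4)} (hpix : (pix t).length = dmax) (hx : x = pix t) :
    Qd dmax qt v pix G t (dmax - x.length) = qt t x (v t) := by
  subst hx
  rw [hpix, Nat.sub_self, Qd, ← hpix, List.take_length]

theorem one_sub_Gnext_mul_Qd (hqt : ∀ s, 0 < qt t s (v t))
    (hG : ∀ x, x <+: pix t → G x ∈ Set.Icc 0 1) (hpix : (pix t).length = dmax)
    {x : List (Fin 4)} (hx : x <+: pix t) :
    (1 - G x) * qt t x (v t)
      = Qd dmax qt v pix G t (dmax - x.length) * (1 - Gnext dmax qt v pix G t x) := by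
  by_cases hlt : x.length < dmax
  · have hQ := (Qd_pos (dmax := dmax) hqt hG (dmax - x.length)).ne'
    rw [Gnext, if_pos ⟨hx, hlt⟩, Qd_of_prefix hx hlt]
    rw [Qd_of_prefix hx hlt] at hQ
    field_simp
    ring
  · have hxp : x = pix t := hx.eq_of_length (by have := hx.length_le; omega)
    rw [Gnext, if_neg (fun h => hlt h.2), Qd_of_eq_pix hpix hxp, mul_comm]

theorem Gnext_mul_Qd (hqt : ∀ s, 0 < qt t s (v t))
    (hG : ∀ x, x <+: pix t → G x ∈ Set.Icc 0 1) (hpix : (pix t).length = dmax)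
    {x : List (Fin 4)} {i : Fin 4} (hxi : x ++ [i] <+: pix t) :
    G x * Qd dmax qt v pix G t (dmax - (x ++ [i]).length)
      = Qd dmax qt v pix G t (dmax - x.length) * Gnext dmax qt v pix G t x := by
  have hlt : x.length < dmax := by have := hxi.length_le; simp at this; omega
  have hQ := (Qd_pos (dmax := dmax) hqt hG (dmax - x.length)).ne'
  rw [Gnext, if_pos ⟨(List.prefix_append x [i]).trans hxi, hlt⟩, List.length_append,
    List.length_singleton, ← Nat.sub_sub]
  field_simp

theorem Gnext_mem_Icc (hqt : ∀ s, 0 < qt t s (v t))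
    (hG : ∀ x : List (Fin 4), x.length ≤ dmax → G x ∈ Set.Icc 0 1)
    (hpix : (pix t).length = dmax) {x : List (Fin 4)} (hx : x.length ≤ dmax) :
    Gnext dmax qt v pix G t x ∈ Set.Icc 0 1 := by
  have hG' : ∀ y, y <+: pix t → G y ∈ Set.Icc 0 1 := fun y hy => hG y (hpix ▸ hy.length_le)
  by_cases h : x <+: pix t ∧ x.length < dmax
  · have hQ := Qd_pos (dmax := dmax) hqt hG'
    have hrest := one_sub_Gnext_mul_Qd hqt hG' hpix h.1
    refine ⟨?_, sub_nonneg.1 (nonneg_of_mul_nonneg_right ?_ (hQ (dmax - x.length)))⟩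
    · rw [Gnext, if_pos h]
      exact div_nonneg (mul_nonneg (hG x hx).1 (hQ _).le) (hQ _).le
    · exact hrest ▸ mul_nonneg (sub_nonneg.2 (hG x hx).2) (hqt x).le
  · rw [Gnext, if_neg h]
    exact hG x hx

theorem weight_mul_qt_leafOf (hqt : ∀ s, 0 < qt t s (v t))
    (hG : ∀ x : List (Fin 4), x.length ≤ dmax → G x ∈ Set.Icc 0 1)
    (hpix : (pix t).length = dmax) (m : FullTree 4 dmax) :
    weight G [] m * qt t (leafOf [] m (pix t)) (v t)
      = Qd dmax qt v pix G t dmax * weight (Gnext dmax qt v pix G t) [] m := by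
  have hG' : ∀ y, y <+: pix t → G y ∈ Set.Icc 0 1 := fun y hy => hG y (hpix ▸ hy.length_le)
  simpa using weight_mul_leafOf (a := fun x => qt t x (v t))
    (q := fun x => Qd dmax qt v pix G t (dmax - x.length))
    (fun x hx => by rw [Gnext, if_neg fun h => hx h.1])
    (fun x hx => one_sub_Gnext_mul_Qd hqt hG' hpix hx)
    (fun x i hxi => Gnext_mul_Qd hqt hG' hpix hxi) m [] (pix t) rfl hpix.ge

theorem GT_of_length_eq {g : List (Fin 4) → ℝ} {x : List (Fin 4)} (hx : x.length = dmax) :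
    ∀ τ, GT dmax qt v pix g τ x = g x
  | 0 => rfl
  | τ + 1 => by rw [GT, Gnext, if_neg (by omega), GT_of_length_eq hx τ]

theorem GT_mem_Icc (hqt : ∀ t s, 0 < qt t s (v t)) (hpix : ∀ i, (pix i).length = dmax)
    {g : List (Fin 4) → ℝ}
    (hg : ∀ x : List (Fin 4), x.length ≤ dmax → g x ∈ Set.Icc 0 1) :
    ∀ τ x, x.length ≤ dmax → GT dmax qt v pix g τ x ∈ Set.Icc 0 1
  | 0 => hg
  | τ + 1 => fun _ hx => Gnext_mem_Icc (hqt τ) (GT_mem_Icc hqt hpix hg τ) (hpix τ) hx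

theorem weight_mul_like (hqt : ∀ t s, 0 < qt t s (v t)) (hpix : ∀ i, (pix i).length = dmax)
    {g : List (Fin 4) → ℝ}
    (hg : ∀ x : List (Fin 4), x.length ≤ dmax → g x ∈ Set.Icc 0 1)
    (m : FullTree 4 dmax) : ∀ τ,
    weight g [] m * like dmax qt v pix m τ
      = (∏ i ∈ Finset.range τ, Qd dmax qt v pix (GT dmax qt v pix g i) i dmax)
        * weight (GT dmax qt v pix g τ) [] m
  | 0 => by simp [like, GT]
  | τ + 1 => by
      have hlike : like dmax qt v pix m (τ + 1)
          = like dmax qt v pix m τ * qt τ (leafOf [] m (pix τ)) (v τ) :=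
        Finset.prod_range_succ _ _
      rw [hlike, ← mul_assoc, weight_mul_like hqt hpix hg m τ, mul_assoc,
        weight_mul_qt_leafOf (hqt τ) (GT_mem_Icc hqt hpix hg τ) (hpix τ), Finset.prod_range_succ,
        mul_assoc, GT]

end Algorithm

theorem stmt11_general (dmax : ℕ) (V : Type)
    (g : List (Fin 4) → ℝ)
    (hg : ∀ s : List (Fin 4), s.length ≤ dmax → g s ∈ Set.Icc (0 : ℝ) 1)
    (hg1 : ∀ s : List (Fin 4), s.length = dmax → g s = 0)
    (qt : ℕ → List (Fin 4) → V → ℝ)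
    (hqt : ∀ t s x, 0 < qt t s x)
    (v : ℕ → V) (pix : ℕ → List (Fin 4))
    (hpix : ∀ i, (pix i).length = dmax)
    (t : ℕ)
    (s : List (Fin 4)) (hs : s.length ≤ dmax) :
    (∑ m ∈ Finset.univ.filter (fun m : FullTree 4 dmax =>
          s ∈ FullTree.leaves ([] : List (Fin 4)) m),
        FullTree.weight g [] m * like dmax qt v pix m (t + 1)
          / ∑ m' : FullTree 4 dmax, FullTree.weight g [] m' * like dmax qt v pix m' (t + 1))
      = (1 - GT dmax qt v pix g (t + 1) s)
          * (s.inits.dropLast.map (GT dmax qt v pix g (t + 1))).prod := by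
  have hqt' : ∀ t s, 0 < qt t s (v t) := fun t s => hqt t s (v t)
  set G := GT dmax qt v pix g (t + 1)
  set Z := ∏ i ∈ Finset.range (t + 1), Qd dmax qt v pix (GT dmax qt v pix g i) i dmax
  have hZ : Z ≠ 0 := Finset.prod_ne_zero_iff.2 fun i _ =>
    (Qd_pos (hqt' i) (fun x hx => GT_mem_Icc hqt' hpix hg i x ((hpix i) ▸ hx.length_le)) dmax).ne'
  have hG : ∀ x : List (Fin 4), [] <+: x → x.length = ([] : List (Fin 4)).length + dmax →
      G x = 0 := fun x _ hx => by
    rw [List.length_nil, zero_add] at hx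
    exact (GT_of_length_eq hx _).trans (hg1 x hx)
  have hpost (m : FullTree 4 dmax) : FullTree.weight g [] m * like dmax qt v pix m (t + 1)
      = Z * FullTree.weight G [] m := weight_mul_like hqt' hpix hg m (t + 1)
  simp only [hpost, ← Finset.mul_sum, FullTree.sum_weight_eq_one G [] hG,
    mul_one, mul_div_cancel_left₀ _ hZ]
  simpa using FullTree.sum_weight_filter_mem_leaves G [] s hs hG

/-- Blocks are encoded by their quadrant paths `List (Fin 4)` of length
`≤ dmax`; the proper ancestors `A_s` of a block `s` are its proper prefixes
`s.inits.dropLast`.  With model prior `p(m) = weight g [] m`, likelihood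
`p(v^t | m) = like dmax qt v pix m (t+1)`, posterior `p(m | v^t) ∝ p(m) p(v^t | m)`, and
sequentially updated weights `g_{s|t} = GT dmax qt v pix g (t+1) s`, the marginal posterior
probability that `s` is a leaf of the true model satisfies
`∑_{m : s ∈ L^m} p(m | v^t) = (1 - g_{s|t}) ∏_{s' ∈ A_s} g_{s'|t}`. -/
theorem stmt11 (dmax : ℕ) (V : Type) [Fintype V]
    (g : List (Fin 4) → ℝ)
    (hg : ∀ s : List (Fin 4), s.length ≤ dmax → g s ∈ Set.Icc (0 : ℝ) 1)
    (hg1 : ∀ s : List (Fin 4), s.length = dmax → g s = 0)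
    (qt : ℕ → List (Fin 4) → V → ℝ)
    (hqt : ∀ t s x, 0 < qt t s x)
    (hqts : ∀ t s, ∑ x : V, qt t s x = 1)
    (v : ℕ → V) (pix : ℕ → List (Fin 4))
    (hpix : ∀ i, (pix i).length = dmax)
    (hinj : ∀ i j, i < 4 ^ dmax → j < 4 ^ dmax → pix i = pix j → i = j)
    (t : ℕ) (ht : t < 4 ^ dmax)
    (s : List (Fin 4)) (hs : s.length ≤ dmax) :
    (∑ m ∈ Finset.univ.filter (fun m : FullTree 4 dmax =>
          s ∈ FullTree.leaves ([] : List (Fin 4)) m),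
        FullTree.weight g [] m * like dmax qt v pix m (t + 1)
          / ∑ m' : FullTree 4 dmax, FullTree.weight g [] m' * like dmax qt v pix m' (t + 1))
      = (1 - GT dmax qt v pix g (t + 1) s)
          * (s.inits.dropLast.map (GT dmax qt v pix g (t + 1))).prod :=
  stmt11_general dmax V g hg hg1 qt hqt v pix hpix t s hs
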